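/- arXiv:0705.1025 — 3 statements merged into one kernel-verified Lean document; each statement's English description precedes it below -/
import Mathlib

section
/- Let G be a finite connected bipartite simple graph and let pq and rs be edges of G. Then pq ∼_G rs if and only if exactly one of the two equalities d(p,r) = d(q,r) + 1 and d(p,s) = d(q,s) + 1 holds (that is, exactly one of r and s has a shortest path to p that passes through q). -/
/-- Winkler's relation. -/
def Winkler {V : Type*} (G : SimpleGraph V) (p q r s : V) : Prop :=
  G.dist p r + G.dist q s ≠ G.dist p s + G.dist q r

namespace SimpleGraph

variable {V : Type*} {G : SimpleGraph V} {u v w : V}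

/-- Shortest walks `u ⟶ v` and `u ⟶ w` close up with the edge `vw` into a closed walk of length
`dist u v + dist u w + 1`, which is even in a bipartite graph. -/
lemma Colorable.dist_ne_of_adj (hG : G.Colorable 2) (hadj : G.Adj v w) (hreach : G.Reachable u v) :
    G.dist u v ≠ G.dist u w := by
  obtain ⟨p, hp⟩ := hreach.exists_walk_length_eq_dist
  obtain ⟨q, hq⟩ := (hreach.trans hadj.reachable).exists_walk_length_eq_dist
  have hcycle : Even ((p.concat hadj).append q.reverse).length :=
    two_colorable_iff_forall_loop_even.mp hG u _
  rw [Walk.length_append, Walk.length_concat, Walk.length_reverse, hp, hq] at hcycle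
  intro hdist
  rw [hdist, add_right_comm, ← two_mul] at hcycle
  exact Nat.not_even_two_mul_add_one _ hcycle

lemma Colorable.dist_eq_dist_add_one_of_adj (hG : G.Colorable 2) (hadj : G.Adj v w)
    (hreach : G.Reachable u v) :
    G.dist u v = G.dist u w + 1 ∨ G.dist u w = G.dist u v + 1 := by
  grind [hG.dist_ne_of_adj hadj hreach, hadj.diff_dist_adj (u := u)]

end SimpleGraph

theorem winkler_iff_xor_shortest_path_general
    {V : Type*} (G : SimpleGraph V) (hconn : G.Connected)
    (hbip : G.Colorable 2) {p q r s : V} (hpq : G.Adj p q) :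
    Winkler G p q r s ↔
      Xor' (G.dist p r = G.dist q r + 1) (G.dist p s = G.dist q s + 1) := by
  have hr := hbip.dist_eq_dist_add_one_of_adj hpq (hconn r p)
  have hs := hbip.dist_eq_dist_add_one_of_adj hpq (hconn s p)
  rw [G.dist_comm, G.dist_comm (u := r)] at hr
  rw [G.dist_comm, G.dist_comm (u := s)] at hs
  -- `d(p,x) - d(q,x) = ±1` for `x = r, s`, and Winkler's relation says that the two signs differ.
  simp only [Winkler, Xor', xor_def]
  omega

/-- In a finite connected bipartite graph, `pq ∼_G rs` iff exactly one of `r`, `s`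
has a shortest path to `p` passing through `q`. -/
theorem winkler_iff_xor_shortest_path
    {V : Type*} [Fintype V] (G : SimpleGraph V) (hconn : G.Connected)
    (hbip : G.Colorable 2) {p q r s : V} (hpq : G.Adj p q) (hrs : G.Adj r s) :
    Winkler G p q r s ↔
      Xor' (G.dist p r = G.dist q r + 1) (G.dist p s = G.dist q s + 1) :=
  winkler_iff_xor_shortest_path_general G hconn hbip hpq
end

section
/- Let G be a partial cube, let pq be an edge of G, and let x and y be vertices with x ∈ S_pq and y ∈ S_pq. Then every shortest path from x to y (that is, every walk from x to y whose length equals d(x,y)) has all of its vertices in S_pq and contains no edge of [pq]. -/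
section Hamming

variable {ι : Type*} [Fintype ι] {β : ι → Type*} [∀ i, DecidableEq (β i)] {x y z : ∀ i, β i}

theorem exists_ne_forall_eq_of_hammingDist_eq_one (h : hammingDist x y = 1) :
    ∃ i, x i ≠ y i ∧ ∀ j, j ≠ i → x j = y j := by
  obtain ⟨i, hi⟩ := Finset.card_eq_one.1 h
  have hmem : ∀ j, x j ≠ y j ↔ j = i := fun j => by
    simpa using congrArg (j ∈ ·) hi
  exact ⟨i, (hmem i).2 rfl, fun j hj => not_not.1 (mt (hmem j).1 hj)⟩

theorem hammingDist_eq_add_one_of_eq_of_ne {i : ι}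
    (hyz : ∀ j, j ≠ i → y j = z j) (hne : y i ≠ z i) (hx : x i = y i) :
    hammingDist x z = hammingDist x y + 1 := by
  classical
  have hsplit : Finset.univ.filter (fun j => x j ≠ z j)
      = insert i (Finset.univ.filter fun j => x j ≠ y j) := by
    ext j
    by_cases hj : j = i
    · subst hj; simpa [hx] using hne
    · simp [hj, hyz j hj]
  rw [hammingDist, hsplit, Finset.card_insert_of_notMem (by simpa using hx), hammingDist]

theorem apply_eq_of_hammingDist_add_hammingDist_eq {i : ι}
    (h : hammingDist x z + hammingDist z y = hammingDist x y) (hxy : x i = y i) :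
    z i = x i := by
  by_contra hz
  have hlt : hammingDist x y < hammingDist x z + hammingDist z y := by
    simp only [hammingDist, Finset.card_filter, ← Finset.sum_add_distrib]
    refine Finset.sum_lt_sum (fun j _ => ?_) ⟨i, Finset.mem_univ i, ?_⟩
    · split_ifs <;> simp_all
    · simp [hxy, hxy ▸ Ne.symm hz]
  omega

end Hamming

namespace SimpleGraph

variable {V : Type*} {G : SimpleGraph V}

theorem Walk.dist_add_dist_le_of_mem_support {u v x : V} (w : G.Walk u v)
    (hw : w.length = G.dist u v) (hx : x ∈ w.support) :
    G.dist u x + G.dist x v ≤ G.dist u v := by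
  classical
  calc G.dist u x + G.dist x v
      ≤ (w.takeUntil x hx).length + (w.dropUntil x hx).length :=
        add_le_add (dist_le _) (dist_le _)
    _ = G.dist u v := by rw [← Walk.length_append, Walk.take_spec, hw]

theorem not_winkler_of_dist_eq_add_one {p q a b : V}
    (ha : G.dist a q = G.dist a p + 1) (hb : G.dist b q = G.dist b p + 1) :
    ¬ Winkler G p q a b := by
  rw [Winkler, dist_comm (u := p), dist_comm (u := q), dist_comm (u := p),
    dist_comm (u := q), ha, hb]
  omega

section PartialCube

variable {ι : Type*} [Fintype ι] {f : V → ι → Bool}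
  (hf : ∀ u v, G.dist u v = hammingDist (f u) (f v))
include hf

theorem dist_eq_dist_add_one_of_apply_eq {p q v : V} {i : ι}
    (hi : f p i ≠ f q i) (hoff : ∀ j, j ≠ i → f p j = f q j) (hv : f v i = f p i) :
    G.dist v q = G.dist v p + 1 := by
  rw [hf, hf]
  exact hammingDist_eq_add_one_of_eq_of_ne hoff hi hv

theorem dist_lt_dist_iff_apply_eq {p q v : V} {i : ι}
    (hi : f p i ≠ f q i) (hoff : ∀ j, j ≠ i → f p j = f q j) :
    G.dist v p < G.dist v q ↔ f v i = f p i := by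
  refine ⟨fun hlt => ?_, fun hv => by
    rw [dist_eq_dist_add_one_of_apply_eq hf hi hoff hv]; omega⟩
  by_contra hv
  have hvq : f v i = f q i := by
    revert hi hv; cases f v i <;> cases f p i <;> cases f q i <;> simp
  have := dist_eq_dist_add_one_of_apply_eq hf (Ne.symm hi)
    (fun j hj => (hoff j hj).symm) hvq
  omega

theorem apply_eq_of_mem_support {x y v : V} {i : ι} (w : G.Walk x y)
    (hw : w.length = G.dist x y) (hv : v ∈ w.support) (hxy : f x i = f y i) :
    f v i = f x i := by
  refine apply_eq_of_hammingDist_add_hammingDist_eq (le_antisymm ?_ ?_) hxy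
  · simpa only [hf] using w.dist_add_dist_le_of_mem_support hw hv
  · exact hammingDist_triangle _ _ _

end PartialCube

end SimpleGraph

open SimpleGraph in
theorem partialCube_shortest_path_in_semicube_general
    {V : Type*} (G : SimpleGraph V)
    (hcube : ∃ (d : ℕ) (f : V → Fin d → Bool),
        ∀ u v : V, G.dist u v = hammingDist (f u) (f v))
    {p q : V} (hpq : G.Adj p q) {x y : V}
    (hx : G.dist x p < G.dist x q) (hy : G.dist y p < G.dist y q)
    (w : G.Walk x y) (hw : w.length = G.dist x y) :
    (∀ v ∈ w.support, G.dist v p < G.dist v q) ∧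
      (∀ a b : V, G.Adj a b → s(a, b) ∈ w.edges → ¬ Winkler G p q a b) := by
  obtain ⟨d, f, hf⟩ := hcube
  obtain ⟨i, hi, hoff⟩ := exists_ne_forall_eq_of_hammingDist_eq_one
    (x := f p) (y := f q) (by rw [← hf, dist_eq_one_iff_adj.2 hpq])
  have hsemi : ∀ v, G.dist v p < G.dist v q ↔ f v i = f p i :=
    fun v => dist_lt_dist_iff_apply_eq hf hi hoff
  have hxi : f x i = f p i := (hsemi x).1 hx
  have hpath : ∀ v ∈ w.support, f v i = f p i := fun v hv =>
    (apply_eq_of_mem_support hf w hw hv (hxi.trans ((hsemi y).1 hy).symm)).trans hxi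
  have hside : ∀ v ∈ w.support, G.dist v q = G.dist v p + 1 := fun v hv =>
    dist_eq_dist_add_one_of_apply_eq hf hi hoff (hpath v hv)
  refine ⟨fun v hv => (hsemi v).2 (hpath v hv), fun a b _ hab => ?_⟩
  exact not_winkler_of_dist_eq_add_one (hside a (w.fst_mem_support_of_mem_edges hab))
    (hside b (w.snd_mem_support_of_mem_edges hab))

/-- In a partial cube, a shortest path between two vertices of the semicube `S_pq`
stays inside `S_pq` and uses no edge of the class `[pq]`. -/
theorem partialCube_shortest_path_in_semicube
    {V : Type*} [Fintype V] (G : SimpleGraph V) (hconn : G.Connected)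
    (hcube : ∃ (d : ℕ) (f : V → Fin d → Bool),
        ∀ u v : V, G.dist u v = hammingDist (f u) (f v))
    {p q : V} (hpq : G.Adj p q) {x y : V}
    (hx : G.dist x p < G.dist x q) (hy : G.dist y p < G.dist y q)
    (w : G.Walk x y) (hw : w.length = G.dist x y) :
    (∀ v ∈ w.support, G.dist v p < G.dist v q) ∧
      (∀ a b : V, G.Adj a b → s(a, b) ∈ w.edges → ¬ Winkler G p q a b) :=
  partialCube_shortest_path_in_semicube_general G hcube hpq hx hy w hw
end

section
/- Let G be a finite connected simple graph with at least one edge and with an isometric hypercube labeling f : V(G) → {0,1}^d (so that d(u,v) equals the Hamming distance between f(u) and f(v) for all vertices u, v), and suppose every coordinate is used: for every coordinate i there is an edge uv of G with f(u)_i ≠ f(v)_i. Then the labels of the endpoints of every edge differ in exactly one coordinate; the map c assigning to each edge the unique coordinate in which its endpoints' labels differ is surjective onto the set of d coordinates; and for all edges e, e′ of G, c(e) = c(e′) if and only if e ∼_G e′. Consequently the number of equivalence classes of ∼_G on the edges of G equals d. -/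
section Hamming

variable {ι β : Type*} [Fintype ι]

theorem hammingDist_eq_sum_ite [DecidableEq β] (x y : ι → β) :
    hammingDist x y = ∑ k, if x k ≠ y k then 1 else 0 :=
  Finset.card_filter _ _

theorem hammingDist_eq_one_iff [DecidableEq β] {x y : ι → β} :
    hammingDist x y = 1 ↔ ∃ i, ∀ k, x k ≠ y k ↔ k = i := by
  simp only [hammingDist, Finset.card_eq_one, Finset.ext_iff, Finset.mem_filter,
    Finset.mem_univ, true_and, Finset.mem_singleton]

theorem Bool.ite_ne_add_ite_ne_eq_iff (a b a' b' : Bool) :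
    ((if a ≠ a' then 1 else 0) + (if b ≠ b' then 1 else 0) : ℕ) =
        (if a ≠ b' then 1 else 0) + (if b ≠ a' then 1 else 0) ↔ a = b ∨ a' = b' := by
  cases a <;> cases b <;> cases a' <;> cases b' <;> decide

theorem hammingDist_add_hammingDist_ne_iff {x y z w : ι → Bool} {i j : ι}
    (hxy : ∀ k, x k ≠ y k ↔ k = i) (hzw : ∀ k, z k ≠ w k ↔ k = j) :
    hammingDist x z + hammingDist y w ≠ hammingDist x w + hammingDist y z ↔ i = j := by
  classical
  simp only [hammingDist_eq_sum_ite, ← Finset.sum_add_distrib]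
  have hterm : ∀ k, ((if x k ≠ z k then 1 else 0) + (if y k ≠ w k then 1 else 0) : ℕ) =
      (if x k ≠ w k then 1 else 0) + (if y k ≠ z k then 1 else 0) ↔ ¬(k = i ∧ k = j) := by
    intro k
    rw [Bool.ite_ne_add_ite_ne_eq_iff, ← hxy, ← hzw]
    tauto
  constructor
  · intro hne
    by_contra hij
    exact hne (Finset.sum_congr rfl fun k _ => (hterm k).2 fun ⟨hi, hj⟩ => hij (hi ▸ hj))
  · rintro rfl
    rw [← Finset.add_sum_erase _ _ (Finset.mem_univ i),
      ← Finset.add_sum_erase _ (fun k => (if x k ≠ w k then 1 else 0) +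
        (if y k ≠ z k then 1 else 0)) (Finset.mem_univ i),
      Finset.sum_congr rfl fun k hk => (hterm k).2 fun h => Finset.ne_of_mem_erase hk h.1]
    exact fun h => (hterm i).1 (Nat.add_right_cancel h) ⟨rfl, rfl⟩

end Hamming

theorem winkler_classes_biject_with_coordinates_general
    {V : Type*} (G : SimpleGraph V)
    (hedge : ∃ u v : V, G.Adj u v)
    {d : ℕ} (f : V → Fin d → Bool)
    (hf : ∀ u v : V, G.dist u v = hammingDist (f u) (f v))
    (hused : ∀ i : Fin d, ∃ u v : V, G.Adj u v ∧ f u i ≠ f v i) :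
    (∀ u v : V, G.Adj u v → hammingDist (f u) (f v) = 1) ∧
      ∃ c : V → V → Fin d,
        (∀ u v : V, G.Adj u v → f u (c u v) ≠ f v (c u v)) ∧
        (∀ u v : V, G.Adj u v → ∀ j : Fin d, f u j ≠ f v j → j = c u v) ∧
        (∀ i : Fin d, ∃ u v : V, G.Adj u v ∧ c u v = i) ∧
        (∀ u v r s : V, G.Adj u v → G.Adj r s →
          (c u v = c r s ↔ Winkler G u v r s)) := by
  have hone : ∀ u v, G.Adj u v → hammingDist (f u) (f v) = 1 := fun u v h => by
    rw [← hf, SimpleGraph.dist_eq_one_iff_adj]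
    exact h
  have hflip : ∀ u v, G.Adj u v → ∃ i, ∀ k, f u k ≠ f v k ↔ k = i :=
    fun u v h => hammingDist_eq_one_iff.1 (hone u v h)
  have : Nonempty (Fin d) := by
    obtain ⟨u, v, h⟩ := hedge
    exact ⟨(hflip u v h).choose⟩
  choose! c hc using hflip
  refine ⟨hone, c, fun u v h => (hc u v h _).2 rfl, fun u v h j => (hc u v h j).1,
    fun i => ?_, fun u v r s huv hrs => ?_⟩
  · obtain ⟨u, v, h, hi⟩ := hused i
    exact ⟨u, v, h, ((hc u v h i).1 hi).symm⟩
  · rw [Winkler, hf u r, hf v s, hf u s, hf v r]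
    exact (hammingDist_add_hammingDist_ne_iff (hc u v huv) (hc r s hrs)).symm

/-- With an isometric hypercube labeling using every coordinate, edge endpoints'
labels differ in exactly one coordinate; the map `c` assigning to each edge that
unique coordinate is surjective, and two edges get the same coordinate iff they
are Winkler-related.  Hence `∼_G` has exactly `d` equivalence classes. -/
theorem winkler_classes_biject_with_coordinates
    {V : Type*} [Fintype V] (G : SimpleGraph V) (hconn : G.Connected)
    (hedge : ∃ u v : V, G.Adj u v)
    {d : ℕ} (f : V → Fin d → Bool)
    (hf : ∀ u v : V, G.dist u v = hammingDist (f u) (f v))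
    (hused : ∀ i : Fin d, ∃ u v : V, G.Adj u v ∧ f u i ≠ f v i) :
    (∀ u v : V, G.Adj u v → hammingDist (f u) (f v) = 1) ∧
      ∃ c : V → V → Fin d,
        (∀ u v : V, G.Adj u v → f u (c u v) ≠ f v (c u v)) ∧
        (∀ u v : V, G.Adj u v → ∀ j : Fin d, f u j ≠ f v j → j = c u v) ∧
        (∀ i : Fin d, ∃ u v : V, G.Adj u v ∧ c u v = i) ∧
        (∀ u v r s : V, G.Adj u v → G.Adj r s →
          (c u v = c r s ↔ Winkler G u v r s)) :=
  winkler_classes_biject_with_coordinates_general G hedge f hf hused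
end
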